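/- Let f₁, f₂, f₃ ∈ ℝ and define R⋆ = f₁R₁⋆ + f₂R₂⋆ + f₃R₃⋆. Then for every H ∈ T⊥ one has ∑_{i=1}^{n} R⋆(Xᵢ, H)Xᵢ = -nf₁H + f₂(|ξ⊤|²H - η(H)ξ⊤ + nη(H)ξ) + 3f₃(P(tH) + N(tH)). -/

import Mathlib

open RealInnerProductSpace

/-! Each `Xᵢ` is a unit vector orthogonal to `H`, and `Ω(Xᵢ, Xᵢ) = 0` by skew-symmetry, so the
`i`-th summand collapses to `-f₁ H + f₂ (η(Xᵢ)² H - η(H) η(Xᵢ) Xᵢ + η(H) ξ) + 3 f₃ ⟪Xᵢ, φH⟫ φXᵢ`.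
Summing over the orthonormal basis, `∑ ⟪Xᵢ, v⟫ Xᵢ` is the projection of `v` onto `T`: this produces
`ξ⊤`, `|ξ⊤|² = ∑ η(Xᵢ)²` and `φ(tH) = P(tH) + N(tH)`. -/

open Submodule Set in
theorem Orthonormal.starProjection_span_eq_sum {𝕜 E ι : Type*} [RCLike 𝕜] [NormedAddCommGroup E]
    [InnerProductSpace 𝕜 E] [Fintype ι] {v : ι → E} (hv : Orthonormal 𝕜 v)
    [(span 𝕜 (range v)).HasOrthogonalProjection] (x : E) :
    (span 𝕜 (range v)).starProjection x = ∑ i, inner 𝕜 (v i) x • v i := by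
  refine eq_starProjection_of_mem_of_inner_eq_zero
    (sum_mem fun i _ ↦ smul_mem _ _ (subset_span (mem_range_self i))) fun w hw ↦ ?_
  have hperp : span 𝕜 (range v) ≤ (𝕜 ∙ (x - ∑ i, inner 𝕜 (v i) x • v i))ᗮ := by
    refine span_le.2 (range_subset_iff.2 fun j ↦ ?_)
    rw [SetLike.mem_coe, mem_orthogonal_singleton_iff_inner_left, inner_sub_right,
      hv.inner_right_fintype, sub_self]
  exact mem_orthogonal_singleton_iff_inner_right.1 (hperp hw)

open Submodule Set in
theorem Orthonormal.norm_starProjection_span_sq {E ι : Type*} [NormedAddCommGroup E]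
    [InnerProductSpace ℝ E] [Fintype ι] {v : ι → E} (hv : Orthonormal ℝ v)
    [(span ℝ (range v)).HasOrthogonalProjection] (x : E) :
    ‖(span ℝ (range v)).starProjection x‖ ^ 2 = ∑ i, ⟪v i, x⟫ ^ 2 := by
  rw [← real_inner_self_eq_norm_sq, hv.starProjection_span_eq_sum, hv.inner_sum]
  simp [sq]

open Submodule Set in
theorem stmt_15_general
    {V : Type*} [NormedAddCommGroup V] [InnerProductSpace ℝ V] [FiniteDimensional ℝ V]
    (ξ : V)
    (η : V → ℝ) (hη : ∀ X : V, η X = ⟪X, ξ⟫)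
    (φ : V →ₗ[ℝ] V)
    (hφskew : ∀ X Y : V, ⟪φ X, Y⟫ = -⟪X, φ Y⟫)
    (T : Submodule ℝ V)
    (P N t : V → V)
    (hP : ∀ X : V, P X = (T.orthogonalProjectionOnto (φ X) : V))
    (hN : ∀ X : V, N X = (Tᗮ.orthogonalProjectionOnto (φ X) : V))
    (ht : ∀ ν : V, t ν = (T.orthogonalProjectionOnto (φ ν) : V))
    (n : ℕ) (X : Fin n → V)
    (hX : Orthonormal ℝ X)
    (hspan : Submodule.span ℝ (Set.range X) = T)
    (Ω : V → V → ℝ) (hΩ : ∀ A B : V, Ω A B = ⟪A, φ B⟫)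
    (R₁s : V → V → V → V)
    (hR₁s : ∀ A B C : V, R₁s A B C = ⟪B, C⟫ • A - ⟪A, C⟫ • B)
    (R₂s : V → V → V → V)
    (hR₂s : ∀ A B C : V,
      R₂s A B C = (η A * η C) • B - (η B * η C) • A + (⟪A, C⟫ * η B) • ξ - (⟪B, C⟫ * η A) • ξ)
    (R₃s : V → V → V → V)
    (hR₃s : ∀ A B C : V, R₃s A B C = Ω C B • φ A - Ω C A • φ B + (2 * Ω A B) • φ C)
    (f₁ f₂ f₃ : ℝ) (Rs : V → V → V → V)
    (hRs : ∀ A B C : V, Rs A B C = f₁ • R₁s A B C + f₂ • R₂s A B C + f₃ • R₃s A B C)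
    : ∀ H ∈ Tᗮ,
      ∑ i, Rs (X i) H (X i) =
        (-(n : ℝ) * f₁) • H
          + f₂ • (‖(T.orthogonalProjectionOnto ξ : V)‖ ^ 2 • H
              - η H • (T.orthogonalProjectionOnto ξ : V) + ((n : ℝ) * η H) • ξ)
          + (3 * f₃) • (P (t H) + N (t H)) := by
  intro H hH
  subst hspan
  have hHX (i : Fin n) : ⟪H, X i⟫ = 0 :=
    inner_left_of_mem_orthogonal (subset_span (mem_range_self i)) hH
  have hΩself (A : V) : ⟪A, φ A⟫ = 0 := by
    linarith [hφskew A A, real_inner_comm A (φ A)]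
  have summand (i : Fin n) : Rs (X i) H (X i) = (-f₁) • H
      + f₂ • (⟪X i, ξ⟫ ^ 2 • H - η H • (⟪X i, ξ⟫ • X i) + η H • ξ)
      + (3 * f₃) • φ (⟪X i, φ H⟫ • X i) := by
    rw [hRs, hR₁s, hR₂s, hR₃s]
    simp only [hΩ, hη, hHX i, hΩself, real_inner_self_eq_norm_sq, hX.1 i, map_smul]
    module
  simp only [hP, hN, ht, coe_orthogonalProjectionOnto_apply]
  rw [starProjection_add_starProjection_orthogonal, hX.norm_starProjection_span_sq,
    hX.starProjection_span_eq_sum, hX.starProjection_span_eq_sum,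
    Finset.sum_congr rfl fun i _ ↦ summand i]
  simp only [Finset.sum_add_distrib, Finset.sum_sub_distrib, ← Finset.smul_sum, ← map_sum,
    ← Finset.sum_smul, Finset.sum_const, Finset.card_univ, Fintype.card_fin]
  module

theorem stmt_15
    {V : Type*} [NormedAddCommGroup V] [InnerProductSpace ℝ V] [FiniteDimensional ℝ V]
    (ξ : V) (hξ : ‖ξ‖ = 1)
    (η : V → ℝ) (hη : ∀ X : V, η X = ⟪X, ξ⟫)
    (φ : V →ₗ[ℝ] V)
    (hφ2 : ∀ X : V, φ (φ X) = -X + η X • ξ)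
    (hφskew : ∀ X Y : V, ⟪φ X, Y⟫ = -⟪X, φ Y⟫)
    (T : Submodule ℝ V)
    (P N t s : V → V)
    (hP : ∀ X : V, P X = (T.orthogonalProjectionOnto (φ X) : V))
    (hN : ∀ X : V, N X = (Tᗮ.orthogonalProjectionOnto (φ X) : V))
    (ht : ∀ ν : V, t ν = (T.orthogonalProjectionOnto (φ ν) : V))
    (hs : ∀ ν : V, s ν = (Tᗮ.orthogonalProjectionOnto (φ ν) : V))
    (n : ℕ) (X : Fin n → V)
    (hX : Orthonormal ℝ X)
    (hspan : Submodule.span ℝ (Set.range X) = T)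
    (Ω : V → V → ℝ) (hΩ : ∀ A B : V, Ω A B = ⟪A, φ B⟫)
    (R₁s : V → V → V → V)
    (hR₁s : ∀ A B C : V, R₁s A B C = ⟪B, C⟫ • A - ⟪A, C⟫ • B)
    (R₂s : V → V → V → V)
    (hR₂s : ∀ A B C : V,
      R₂s A B C = (η A * η C) • B - (η B * η C) • A + (⟪A, C⟫ * η B) • ξ - (⟪B, C⟫ * η A) • ξ)
    (R₃s : V → V → V → V)
    (hR₃s : ∀ A B C : V, R₃s A B C = Ω C B • φ A - Ω C A • φ B + (2 * Ω A B) • φ C)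
    (f₁ f₂ f₃ : ℝ) (Rs : V → V → V → V)
    (hRs : ∀ A B C : V, Rs A B C = f₁ • R₁s A B C + f₂ • R₂s A B C + f₃ • R₃s A B C)
    : ∀ H ∈ Tᗮ,
      ∑ i, Rs (X i) H (X i) =
        (-(n : ℝ) * f₁) • H
          + f₂ • (‖(T.orthogonalProjectionOnto ξ : V)‖ ^ 2 • H
              - η H • (T.orthogonalProjectionOnto ξ : V) + ((n : ℝ) * η H) • ξ)
          + (3 * f₃) • (P (t H) + N (t H)) :=
  stmt_15_general ξ η hη φ hφskew T P N t hP hN ht n X hX hspan Ω hΩ R₁s hR₁s R₂s hR₂s R₃s hR₃s f₁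
    f₂ f₃ Rs hRs
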